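/- arXiv:math-ph/0605060 — 2 statements merged into one kernel-verified Lean document; each statement's English description precedes it below -/
import Mathlib

section
/- On the Lie algebra g = R X_0 ⊕ v ⊕ R X_{n+1} (v = R^{2n}) with bracket [u,w] = b(JAu,w)X_0, [X_{n+1}, u] = JAu, the symmetric bilinear form ⟨x_0^1 X_0 + u^1 + t^1 X_{n+1}, x_0^2 X_0 + u^2 + t^2 X_{n+1}⟩ = b(u^1, u^2) + x_0^1 t^2 + x_0^2 t^1 is non-degenerate and ad-invariant: ⟨[x,y],z⟩ + ⟨y,[x,z]⟩ = 0 for all x,y,z ∈ g. -/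
open Matrix

/-- The standard symplectic matrix on `ℝ^{2n}`. -/
noncomputable def Jmat (n : ℕ) : Matrix (Fin n ⊕ Fin n) (Fin n ⊕ Fin n) ℝ :=
  Matrix.fromBlocks 0 (-1) 1 0

/-- The bracket of the double extension `g = ℝ X_0 ⊕ v ⊕ ℝ X_{n+1}`. -/
noncomputable def gBracket (n : ℕ) (A : Matrix (Fin n ⊕ Fin n) (Fin n ⊕ Fin n) ℝ)
    (x y : ℝ × (Fin n ⊕ Fin n → ℝ) × ℝ) : ℝ × (Fin n ⊕ Fin n → ℝ) × ℝ :=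
  (A.mulVec ((Jmat n * A).mulVec x.2.1) ⬝ᵥ y.2.1,
   x.2.2 • (Jmat n * A).mulVec y.2.1 - y.2.2 • (Jmat n * A).mulVec x.2.1, 0)

/-- The neutral metric `⟨(x_0¹,u¹,t¹),(x_0²,u²,t²)⟩ = b(u¹,u²) + x_0¹ t² + x_0² t¹`. -/
noncomputable def gForm (n : ℕ) (A : Matrix (Fin n ⊕ Fin n) (Fin n ⊕ Fin n) ℝ)
    (x y : ℝ × (Fin n ⊕ Fin n → ℝ) × ℝ) : ℝ :=
  A.mulVec x.2.1 ⬝ᵥ y.2.1 + x.1 * y.2.2 + y.1 * x.2.2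

lemma Jmat_transpose (n : ℕ) : (Jmat n)ᵀ = -Jmat n := by
  simp [Jmat, Matrix.fromBlocks_transpose, Matrix.fromBlocks_neg]

lemma skewB (n : ℕ) (A : Matrix (Fin n ⊕ Fin n) (Fin n ⊕ Fin n) ℝ) (hA : Aᵀ = A) :
    (A * Jmat n * A)ᵀ = -(A * Jmat n * A) := by
  rw [Matrix.transpose_mul, Matrix.transpose_mul, hA, Jmat_transpose]
  noncomm_ring

lemma sym_dot (n : ℕ) (A : Matrix (Fin n ⊕ Fin n) (Fin n ⊕ Fin n) ℝ) (hA : Aᵀ = A)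
    (u v : Fin n ⊕ Fin n → ℝ) : A.mulVec u ⬝ᵥ v = u ⬝ᵥ A.mulVec v := by
  calc A.mulVec u ⬝ᵥ v = v ⬝ᵥ A.mulVec u := dotProduct_comm _ _
    _ = A.vecMul v ⬝ᵥ u := Matrix.dotProduct_mulVec _ _ _
    _ = Aᵀ.mulVec v ⬝ᵥ u := by rw [Matrix.mulVec_transpose]
    _ = u ⬝ᵥ A.mulVec v := by rw [hA, dotProduct_comm]

lemma skew_dot (n : ℕ) (A : Matrix (Fin n ⊕ Fin n) (Fin n ⊕ Fin n) ℝ) (hA : Aᵀ = A)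
    (u v : Fin n ⊕ Fin n → ℝ) :
    (A * Jmat n * A).mulVec u ⬝ᵥ v = -(u ⬝ᵥ (A * Jmat n * A).mulVec v) := by
  calc (A * Jmat n * A).mulVec u ⬝ᵥ v = v ⬝ᵥ (A * Jmat n * A).mulVec u :=
        dotProduct_comm _ _
    _ = (A * Jmat n * A).vecMul v ⬝ᵥ u := Matrix.dotProduct_mulVec _ _ _
    _ = (A * Jmat n * A)ᵀ.mulVec v ⬝ᵥ u := by rw [Matrix.mulVec_transpose]
    _ = -(u ⬝ᵥ (A * Jmat n * A).mulVec v) := by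
        rw [skewB n A hA, Matrix.neg_mulVec, neg_dotProduct, dotProduct_comm]

lemma dot_BV (n : ℕ) (A : Matrix (Fin n ⊕ Fin n) (Fin n ⊕ Fin n) ℝ) (hA : Aᵀ = A)
    (u v : Fin n ⊕ Fin n → ℝ) :
    A.mulVec u ⬝ᵥ (Jmat n * A).mulVec v = u ⬝ᵥ (A * Jmat n * A).mulVec v := by
  rw [sym_dot n A hA, Matrix.mulVec_mulVec, Matrix.mul_assoc]

/-- For `A` nonsingular symmetric, the form `⟨,⟩` on the double extension is
non-degenerate and ad-invariant: `⟨[x,y],z⟩ + ⟨y,[x,z]⟩ = 0`. -/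
theorem stmt_5 (n : ℕ) (A : Matrix (Fin n ⊕ Fin n) (Fin n ⊕ Fin n) ℝ)
    (hA : Aᵀ = A) (hinv : IsUnit A) :
    (∀ x : ℝ × (Fin n ⊕ Fin n → ℝ) × ℝ, (∀ y, gForm n A x y = 0) → x = 0) ∧
    ∀ x y z : ℝ × (Fin n ⊕ Fin n → ℝ) × ℝ,
      gForm n A (gBracket n A x y) z + gForm n A y (gBracket n A x z) = 0 := by
  constructor
  · rintro ⟨a, u, t⟩ h
    have h1 : a = 0 := by simpa [gForm] using h (0, 0, 1)
    have h3 : t = 0 := by simpa [gForm] using h (1, 0, 0)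
    have h2 : A.mulVec u = 0 := by
      funext i
      simpa [gForm, dotProduct_single] using h (0, Pi.single i 1, 0)
    have hu : u = 0 := by
      have hinj := Matrix.mulVec_injective_iff_isUnit.2 hinv
      have := @hinj u 0
      simp only [Matrix.mulVec_zero] at this
      exact this h2
    simp [h1, h2, h3, hu]
  · rintro ⟨a, u, t⟩ ⟨b, v, s⟩ ⟨c, w, r⟩
    simp only [gForm, gBracket, Matrix.mulVec_mulVec, Matrix.mulVec_sub,
      Matrix.mulVec_smul, sub_dotProduct, smul_dotProduct,
      dotProduct_sub, dotProduct_smul, ← Matrix.mul_assoc,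
      dot_BV n A hA]
    have h1 := skew_dot n A hA u w
    have h2 := skew_dot n A hA u v
    simp only [smul_eq_mul]
    linear_combination t * (skew_dot n A hA v w) + r * (dotProduct_comm ((A * Jmat n * A).mulVec u) v)
end

section
/- The Lie algebra g constructed as the double extension of (R^{2n}, b) by (R, JA) with A nonsingular symmetric is solvable, and R X_0 ⊕ R^{2n} is a nilpotent ideal isomorphic to the Heisenberg Lie algebra h_n. -/
open Matrix

/-- The bracket of `g` restricted to the ideal `ℝ X_0 ⊕ ℝ^{2n}`. -/
noncomputable def hBracket (n : ℕ) (A : Matrix (Fin n ⊕ Fin n) (Fin n ⊕ Fin n) ℝ)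
    (x y : ℝ × (Fin n ⊕ Fin n → ℝ)) : ℝ × (Fin n ⊕ Fin n → ℝ) :=
  (A.mulVec ((Jmat n * A).mulVec x.2) ⬝ᵥ y.2, 0)

/-- The Heisenberg bracket on `h_n = ℝ X_0 ⊕ v`: `[(a,u),(b,w)] = ((Ju,w), 0)`. -/
noncomputable def heisBracket (n : ℕ) (x y : ℝ × (Fin n ⊕ Fin n → ℝ)) :
    ℝ × (Fin n ⊕ Fin n → ℝ) :=
  ((Jmat n).mulVec x.2 ⬝ᵥ y.2, 0)

/-- The double extension `g` of `(ℝ^{2n}, b)` by `(ℝ, JA)`, `A` nonsingular symmetric,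
is solvable (its third derived algebra vanishes), and `ℝ X_0 ⊕ ℝ^{2n}` is a
(2-step) nilpotent ideal isomorphic to the Heisenberg Lie algebra `h_n`. -/
theorem stmt_6 (n : ℕ) (A : Matrix (Fin n ⊕ Fin n) (Fin n ⊕ Fin n) ℝ)
    (hA : Aᵀ = A) (hinv : IsUnit A) :
    -- solvability: brackets of elements of the second derived algebra vanish
    (∀ x₁ x₂ x₃ x₄ x₅ x₆ x₇ x₈ : ℝ × (Fin n ⊕ Fin n → ℝ) × ℝ,
        gBracket n A
          (gBracket n A (gBracket n A x₁ x₂) (gBracket n A x₃ x₄))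
          (gBracket n A (gBracket n A x₅ x₆) (gBracket n A x₇ x₈)) = 0) ∧
    -- ℝ X_0 ⊕ ℝ^{2n} = {x | x.2.2 = 0} is an ideal
    (∀ x y : ℝ × (Fin n ⊕ Fin n → ℝ) × ℝ, y.2.2 = 0 → (gBracket n A x y).2.2 = 0) ∧
    -- this ideal is 2-step nilpotent
    (∀ x y z : ℝ × (Fin n ⊕ Fin n → ℝ) × ℝ, x.2.2 = 0 → y.2.2 = 0 → z.2.2 = 0 →
        gBracket n A x (gBracket n A y z) = 0) ∧
    -- and isomorphic (as a Lie algebra) to the Heisenberg Lie algebra h_n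
    ∃ e : (ℝ × (Fin n ⊕ Fin n → ℝ)) ≃ₗ[ℝ] (ℝ × (Fin n ⊕ Fin n → ℝ)),
      ∀ x y, e (hBracket n A x y) = heisBracket n (e x) (e y) := by

  have hdet : IsUnit A.det := (Matrix.isUnit_iff_isUnit_det A).mp hinv
  refine ⟨?_, ?_, ?_, ?_⟩
  · intro x₁ x₂ x₃ x₄ x₅ x₆ x₇ x₈
    simp [gBracket, Matrix.mulVec_zero]
  · intro x y hy
    simp [gBracket]
  · intro x y z hx hy hz
    simp [gBracket, hx, hy, hz, Matrix.mulVec_zero]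
  · refine ⟨(LinearEquiv.refl ℝ ℝ).prodCongr
      (LinearEquiv.ofLinear A.mulVecLin A⁻¹.mulVecLin ?_ ?_), ?_⟩
    · rw [← Matrix.mulVecLin_mul, Matrix.mul_nonsing_inv A hdet, Matrix.mulVecLin_one]
    · rw [← Matrix.mulVecLin_mul, Matrix.nonsing_inv_mul A hdet, Matrix.mulVecLin_one]
    · intro x y
      simp only [hBracket, heisBracket, LinearEquiv.prodCongr_apply, LinearEquiv.refl_apply,
        LinearEquiv.ofLinear_apply, Matrix.mulVecLin_apply, Prod.mk.injEq]
      constructor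
      · rw [dotProduct_mulVec, ← Matrix.mulVec_transpose]
        · rw [Matrix.mulVec_mulVec, Matrix.mulVec_mulVec, Matrix.mulVec_mulVec, hA,
            Matrix.mul_assoc]
      · simp [Matrix.mulVec_zero]
end
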